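/- Let $r > 0$, $\kappa < 0$, $0 < r_j \le r$ with $4r - \kappa - r_j > 0$, and fix a real $c$. Define $W(x) = \int_c^x \left\lceil \lceil s\rfloor^{r/r_j} - \lceil c\rfloor^{r/r_j}\right\rfloor^{(4r-\kappa-r_j)/r} ds$ and $\xi(x) = \lceil x\rfloor^{r/r_j} - \lceil c\rfloor^{r/r_j}$. Then $W(x) \le 2^{1 - r_j/r}\, |\xi(x)|^{(4r-\kappa)/r}$ for all real $x$. -/

import Mathlib

/-!
Every `s` between `c` and `x` has `|ξ(s)| ≤ |ξ(x)|` because `spow · (r/rj)` is monotone, so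
`W(x) ≤ |ξ(x)|^((4r-κ-rj)/r) |x - c|`. Inverting `ξ`, the map `spow · (rj/r)` is Hölder of order
`rj/r` with constant `2^(1 - rj/r)`, whence `|x - c| ≤ 2^(1 - rj/r) |ξ(x)|^(rj/r)`; the exponents add
up to `(4r - κ)/r`.
-/

noncomputable def spow (a b : ℝ) : ℝ := Real.sign a * |a| ^ b

open Set

lemma spow_of_nonneg {a : ℝ} (b : ℝ) (ha : 0 ≤ a) (hb : 0 < b) : spow a b = a ^ b := by
  rcases ha.eq_or_lt with rfl | ha
  · simp [spow, Real.zero_rpow hb.ne']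
  · simp [spow, Real.sign_of_pos ha, abs_of_pos ha]

lemma spow_neg (a b : ℝ) : spow (-a) b = -spow a b := by
  simp [spow, Real.sign_neg]

lemma spow_of_nonpos {a : ℝ} (b : ℝ) (ha : a ≤ 0) (hb : 0 < b) : spow a b = -(-a) ^ b := by
  rw [← spow_of_nonneg b (neg_nonneg.2 ha) hb, spow_neg, neg_neg]

lemma abs_spow_le (a b : ℝ) : |spow a b| ≤ |a| ^ b := by
  have hsign : |Real.sign a| ≤ 1 := by
    rcases Real.sign_apply_eq a with h | h | h <;> simp [h]
  rw [spow, abs_mul, abs_of_nonneg (Real.rpow_nonneg (abs_nonneg a) b)]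
  exact mul_le_of_le_one_left (Real.rpow_nonneg (abs_nonneg a) b) hsign

lemma spow_mono {b : ℝ} (hb : 0 < b) : Monotone (spow · b) := by
  intro a a' (h : a ≤ a')
  change spow a b ≤ spow a' b
  rcases le_total 0 a with ha | ha
  · rw [spow_of_nonneg b ha hb, spow_of_nonneg b (ha.trans h) hb]
    exact Real.rpow_le_rpow ha h hb.le
  rcases le_total 0 a' with ha' | ha'
  · rw [spow_of_nonpos b ha hb, spow_of_nonneg b ha' hb]
    exact (neg_nonpos.2 (Real.rpow_nonneg (neg_nonneg.2 ha) b)).trans (Real.rpow_nonneg ha' b)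
  · rw [spow_of_nonpos b ha hb, spow_of_nonpos b ha' hb, neg_le_neg_iff]
    exact Real.rpow_le_rpow (neg_nonneg.2 ha') (neg_le_neg h) hb.le

lemma spow_spow_inv (a : ℝ) {b : ℝ} (hb : 0 < b) : spow (spow a b) b⁻¹ = a := by
  have key : ∀ a : ℝ, 0 ≤ a → spow (spow a b) b⁻¹ = a := fun a ha => by
    rw [spow_of_nonneg b ha hb, spow_of_nonneg _ (Real.rpow_nonneg ha b) (inv_pos.2 hb),
      Real.rpow_rpow_inv ha hb.ne']
  rcases le_total 0 a with ha | ha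
  · exact key a ha
  · simpa [spow_neg] using key (-a) (neg_nonneg.2 ha)

lemma Real.rpow_add_rpow_le_two_rpow_mul_rpow_add {a b p : ℝ} (ha : 0 ≤ a) (hb : 0 ≤ b)
    (hp0 : 0 ≤ p) (hp1 : p ≤ 1) : a ^ p + b ^ p ≤ 2 ^ (1 - p) * (a + b) ^ p := by
  have hmid := (Real.concaveOn_rpow hp0 hp1).2 (mem_Ici.2 ha) (mem_Ici.2 hb)
    (by norm_num : (0 : ℝ) ≤ 1 / 2) (by norm_num : (0 : ℝ) ≤ 1 / 2) (by norm_num)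
  have h2p : (0 : ℝ) < 2 ^ p := by positivity
  simp only [smul_eq_mul] at hmid
  rw [show 1 / 2 * a + 1 / 2 * b = (a + b) / 2 by ring,
    Real.div_rpow (by positivity) zero_le_two, le_div_iff₀ h2p] at hmid
  rw [Real.rpow_sub zero_lt_two, Real.rpow_one, div_mul_eq_mul_div, le_div_iff₀ h2p]
  linarith

lemma spow_sub_spow_le_of_nonneg {p u v : ℝ} (hp0 : 0 < p) (hp1 : p ≤ 1) (hv : 0 ≤ v)
    (hvu : v ≤ u) : spow u p - spow v p ≤ (u - v) ^ p := by
  rw [spow_of_nonneg p hv hp0, spow_of_nonneg p (hv.trans hvu) hp0, sub_le_iff_le_add']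
  simpa using Real.rpow_add_le_add_rpow hv (sub_nonneg.2 hvu) hp0.le hp1

lemma spow_sub_spow_le {p u v : ℝ} (hp0 : 0 < p) (hp1 : p ≤ 1) (hvu : v ≤ u) :
    spow u p - spow v p ≤ 2 ^ (1 - p) * (u - v) ^ p := by
  have h2 : (1 : ℝ) ≤ 2 ^ (1 - p) := Real.one_le_rpow one_le_two (by linarith)
  have hnn : 0 ≤ (u - v) ^ p := Real.rpow_nonneg (sub_nonneg.2 hvu) p
  have hweaken := le_mul_of_one_le_left hnn h2
  rcases le_total 0 v with hv | hv
  · exact (spow_sub_spow_le_of_nonneg hp0 hp1 hv hvu).trans hweaken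
  rcases le_total 0 u with hu | hu
  · rw [spow_of_nonpos p hv hp0, spow_of_nonneg p hu hp0, sub_neg_eq_add, sub_eq_add_neg u v]
    exact Real.rpow_add_rpow_le_two_rpow_mul_rpow_add hu (neg_nonneg.2 hv) hp0.le hp1
  · have h := spow_sub_spow_le_of_nonneg hp0 hp1 (neg_nonneg.2 hu) (neg_le_neg hvu)
    rw [spow_neg, spow_neg, neg_sub_neg, neg_sub_neg] at h
    exact h.trans hweaken

lemma abs_spow_sub_spow_le {p : ℝ} (hp0 : 0 < p) (hp1 : p ≤ 1) (u v : ℝ) :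
    |spow u p - spow v p| ≤ 2 ^ (1 - p) * |u - v| ^ p := by
  wlog hvu : v ≤ u generalizing u v
  · rw [abs_sub_comm, abs_sub_comm u]
    exact this v u (le_of_not_ge hvu)
  rw [abs_of_nonneg (sub_nonneg.2 (spow_mono hp0 hvu)), abs_of_nonneg (sub_nonneg.2 hvu)]
  exact spow_sub_spow_le hp0 hp1 hvu

lemma abs_sub_le_two_rpow_mul_abs_spow_sub_spow {q : ℝ} (hq : 1 ≤ q) (u v : ℝ) :
    |u - v| ≤ 2 ^ (1 - q⁻¹) * |spow u q - spow v q| ^ q⁻¹ := by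
  have hq0 : 0 < q := zero_lt_one.trans_le hq
  simpa only [spow_spow_inv _ hq0] using
    abs_spow_sub_spow_le (inv_pos.2 hq0) (inv_le_one_of_one_le₀ hq) (spow u q) (spow v q)

lemma abs_integral_spow_sub_le {g : ℝ → ℝ} (hg : Monotone g) {e : ℝ} (he : 0 ≤ e) (c x : ℝ) :
    |∫ s in c..x, spow (g s - g c) e| ≤ |g x - g c| ^ e * |x - c| := by
  refine intervalIntegral.norm_integral_le_of_norm_le_const (fun s hs => ?_ : ∀ s ∈ uIoc c x,
    ‖spow (g s - g c) e‖ ≤ |g x - g c| ^ e)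
  have hgs : g s ∈ uIcc (g c) (g x) := hg.image_uIcc_subset ⟨s, uIoc_subset_uIcc hs, rfl⟩
  exact (abs_spow_le _ e).trans
    (Real.rpow_le_rpow (abs_nonneg _) (abs_sub_left_of_mem_uIcc hgs) he)

theorem stmt_18_general (r κ rj : ℝ) (hr : 0 < r) (hrj : 0 < rj) (hrjr : rj ≤ r)
    (hpow : 0 < 4 * r - κ - rj) (c : ℝ) (W ξ : ℝ → ℝ)
    (hW : ∀ x, W x = ∫ s in c..x,
        spow (spow s (r / rj) - spow c (r / rj)) ((4 * r - κ - rj) / r))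
    (hξ : ∀ x, ξ x = spow x (r / rj) - spow c (r / rj)) :
    ∀ x, W x ≤ 2 ^ (1 - rj / r) * |ξ x| ^ ((4 * r - κ) / r) := by
  intro x
  have hq : 1 ≤ r / rj := (one_le_div hrj).2 hrjr
  have he : 0 < (4 * r - κ - rj) / r := div_pos hpow hr
  have hp : 0 < rj / r := div_pos hrj hr
  have hW_le : W x ≤ |ξ x| ^ ((4 * r - κ - rj) / r) * |x - c| := by
    rw [hW, hξ]
    exact (le_abs_self _).trans (abs_integral_spow_sub_le (spow_mono (by linarith)) he.le c x)
  have hx_le : |x - c| ≤ 2 ^ (1 - rj / r) * |ξ x| ^ (rj / r) := by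
    simpa only [inv_div, hξ] using abs_sub_le_two_rpow_mul_abs_spow_sub_spow hq x c
  calc W x ≤ |ξ x| ^ ((4 * r - κ - rj) / r) * (2 ^ (1 - rj / r) * |ξ x| ^ (rj / r)) := by
        grw [hW_le, hx_le]
    _ = 2 ^ (1 - rj / r) * |ξ x| ^ ((4 * r - κ - rj) / r + rj / r) := by
        rw [Real.rpow_add' (abs_nonneg _) (add_pos he hp).ne']
        ring
    _ = 2 ^ (1 - rj / r) * |ξ x| ^ ((4 * r - κ) / r) := by
        rw [← add_div, sub_add_cancel]

theorem stmt_18 (r κ rj : ℝ) (hr : 0 < r) (hκ : κ < 0) (hrj : 0 < rj) (hrjr : rj ≤ r)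
    (hpow : 0 < 4 * r - κ - rj) (c : ℝ) (W ξ : ℝ → ℝ)
    (hW : ∀ x, W x = ∫ s in c..x,
        spow (spow s (r / rj) - spow c (r / rj)) ((4 * r - κ - rj) / r))
    (hξ : ∀ x, ξ x = spow x (r / rj) - spow c (r / rj)) :
    ∀ x, W x ≤ 2 ^ (1 - rj / r) * |ξ x| ^ ((4 * r - κ) / r) :=
  stmt_18_general r κ rj hr hrj hrjr hpow c W ξ hW hξ
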